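/- arXiv:1103.0103 — 4 statements merged into one kernel-verified Lean document; each statement's English description precedes it below -/
import Mathlib

section
/- Let P be a d-dimensional convex lattice polytope in ℝ^d and let m be a natural number such that P contains at least m^d + 1 lattice points (i.e. |P ∩ ℤ^d| ≥ m^d + 1). Then P contains at least m + 1 collinear lattice points, i.e. there exist m + 1 distinct points of P ∩ ℤ^d lying on a common line. -/
open MeasureTheory

noncomputable section

/-- The canonical embedding of integer vectors into real vectors. -/
def intVec {d : ℕ} (x : Fin d → ℤ) : Fin d → ℝ := fun i => (x i : ℝ)

/-- `P` is a convex lattice polytope: the convex hull of a finite set of lattice points. -/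
def IsConvexLatticePolytope (d : ℕ) (P : Set (Fin d → ℝ)) : Prop :=
  ∃ V : Finset (Fin d → ℤ), P = convexHull ℝ (intVec '' (V : Set (Fin d → ℤ)))

/-- `P` is `d`-dimensional: its affine span is all of `ℝ^d`. -/
def IsFullDim (d : ℕ) (P : Set (Fin d → ℝ)) : Prop :=
  affineSpan ℝ P = ⊤

/-- The set of lattice points of `P`. -/
def latticePts (d : ℕ) (P : Set (Fin d → ℝ)) : Set (Fin d → ℤ) :=
  {x | intVec x ∈ P}

/-- The lattice `ℤ^d` viewed inside `ℝ^d`. -/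
def latticeSet (d : ℕ) : Set (Fin d → ℝ) := Set.range (intVec (d := d))

/-- Two subsets of `ℝ^d` are lattice-equivalent if some affine bijection of `ℝ^d`
preserving `ℤ^d` maps one onto the other. -/
def LatticeEquiv (d : ℕ) (P₁ P₂ : Set (Fin d → ℝ)) : Prop :=
  ∃ σ : (Fin d → ℝ) ≃ᵃ[ℝ] (Fin d → ℝ), σ '' latticeSet d = latticeSet d ∧ P₂ = σ '' P₁

/-- The type of equivalence classes of `d`-dimensional convex lattice polytopes
satisfying the predicate `Q`, modulo lattice equivalence. -/
def ClassesType (d : ℕ) (Q : Set (Fin d → ℝ) → Prop) : Type :=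
  Quot (fun P₁ P₂ : {P : Set (Fin d → ℝ) // IsConvexLatticePolytope d P ∧ IsFullDim d P ∧ Q P} =>
    LatticeEquiv d P₁.1 P₂.1)

/-- `P` is centrally symmetric (with some center `c`, i.e. `P = 2c - P`). -/
def IsCentrallySymmetric (d : ℕ) (P : Set (Fin d → ℝ)) : Prop :=
  ∃ c : Fin d → ℝ, ∀ x, x ∈ P ↔ (2 : ℝ) • c - x ∈ P

/-- **Rabinowitz's Lemma.** If a `d`-dimensional convex lattice polytope contains at
least `m^d + 1` lattice points, then it contains `m + 1` distinct collinear lattice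
points. -/
theorem rabinowitz (d : ℕ) (P : Set (Fin d → ℝ))
    (hP : IsConvexLatticePolytope d P) (hdim : IsFullDim d P) (m : ℕ)
    (hcard : m ^ d + 1 ≤ (latticePts d P).ncard) :
    ∃ S : Finset (Fin d → ℤ), (S : Set (Fin d → ℤ)) ⊆ latticePts d P ∧
      S.card = m + 1 ∧ Collinear ℝ (intVec '' (S : Set (Fin d → ℤ))) := by
  -- The set of lattice points is finite (otherwise its ncard is 0).
  have hfin : (latticePts d P).Finite := by
    by_contra h
    have h0 : (latticePts d P).ncard = 0 := Set.Infinite.ncard h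
    omega
  -- Convexity of P and a helpful description.
  obtain ⟨V, rfl⟩ := hP
  set P := convexHull ℝ (intVec '' (V : Set (Fin d → ℤ))) with hPdef
  have hconv : Convex ℝ P := convex_convexHull ℝ _
  rcases Nat.eq_zero_or_pos m with hm | hm
  · -- m = 0 : a single lattice point suffices.
    subst hm
    have hne : (latticePts d P).Nonempty :=
      Set.nonempty_of_ncard_ne_zero
        (Nat.one_le_iff_ne_zero.mp (le_trans (Nat.le_add_left 1 _) hcard))
    obtain ⟨x, hx⟩ := hne
    refine ⟨{x}, by simpa using hx, by simp, ?_⟩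
    simp only [Finset.coe_singleton, Set.image_singleton]
    exact collinear_singleton ℝ _
  · haveI : NeZero m := ⟨hm.ne'⟩
    set T := hfin.toFinset with hT
    have hTcard : m ^ d < T.card := by
      have h1 : (latticePts d P).ncard = T.card :=
        Set.ncard_eq_toFinset_card _ hfin
      omega
    -- Pigeonhole: two lattice points of P congruent mod m.
    have hmaps : ∀ a ∈ T, (fun x : Fin d → ℤ => fun i => (x i : ZMod m)) a ∈
        (Finset.univ : Finset (Fin d → ZMod m)) := fun a _ => Finset.mem_univ _
    have hcardlt : (Finset.univ : Finset (Fin d → ZMod m)).card < T.card := by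
      have : (Finset.univ : Finset (Fin d → ZMod m)).card = m ^ d := by
        simp [Finset.card_univ, ZMod.card]
      omega
    obtain ⟨x, hx, y, hy, hne, heq⟩ :=
      Finset.exists_ne_map_eq_of_card_lt_of_maps_to hcardlt hmaps
    rw [hT, Set.Finite.mem_toFinset] at hx hy
    -- Extract the difference divided by m.
    have hdvd : ∀ i, (m : ℤ) ∣ (y i - x i) := by
      intro i
      have h1 : ((y i - x i : ℤ) : ZMod m) = 0 := by
        push_cast
        rw [← congrFun heq i]
        ring
      exact (ZMod.intCast_zmod_eq_zero_iff_dvd _ m).mp h1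
    set v : Fin d → ℤ := fun i => (y i - x i) / m with hv
    have hyv : ∀ i, y i = x i + m * v i := by
      intro i
      have := Int.mul_ediv_cancel' (hdvd i)
      simp only [hv]
      omega
    have hvne : v ≠ 0 := by
      intro h
      apply hne
      funext i
      have := hyv i
      rw [h] at this
      simpa using this.symm
    obtain ⟨i₀, hi₀⟩ : ∃ i, v i ≠ 0 := by
      by_contra h
      push_neg at h
      exact hvne (funext h)
    -- The m+1 points x + k • v, k = 0..m.
    set f : ℕ → (Fin d → ℤ) := fun k => fun i => x i + (k : ℤ) * v i with hf
    have hfinj : Set.InjOn f (Finset.range (m + 1)) := by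
      intro a _ b _ hab
      have := congrFun hab i₀
      simp only [hf] at this
      have : (a : ℤ) * v i₀ = (b : ℤ) * v i₀ := by omega
      have := mul_right_cancel₀ hi₀ this
      exact_mod_cast this
    refine ⟨(Finset.range (m + 1)).image f, ?_, ?_, ?_⟩
    · intro z hz
      simp only [Finset.coe_image, Set.mem_image, Finset.coe_range, Set.mem_Iio] at hz
      obtain ⟨k, hk, rfl⟩ := hz
      -- f k is a convex combination of x and y
      have hkm : (k : ℝ) / m ≤ 1 := by
        rw [div_le_one (by exact_mod_cast hm)]
        exact_mod_cast Nat.lt_succ_iff.mp hk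
      have hkm0 : (0 : ℝ) ≤ (k : ℝ) / m := by positivity
      have hkey : intVec (f k) = (1 - (k : ℝ) / m) • intVec x + ((k : ℝ) / m) • intVec y := by
        funext i
        simp only [intVec, hf, Pi.add_apply, Pi.smul_apply, smul_eq_mul]
        have hyi := hyv i
        have hm0 : (m : ℝ) ≠ 0 := by exact_mod_cast hm.ne'
        rw [hyi]
        push_cast
        field_simp
        ring
      show intVec (f k) ∈ P
      rw [hkey]
      exact hconv hx hy (by linarith) hkm0 (by ring)
    · rw [Finset.card_image_of_injOn (by simpa using hfinj), Finset.card_range]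
    · rw [collinear_iff_exists_forall_eq_smul_vadd]
      refine ⟨intVec x, intVec v, ?_⟩
      rintro p hp
      simp only [Finset.coe_image, Set.mem_image, Finset.coe_range, Set.mem_Iio] at hp
      obtain ⟨q, ⟨k, hk, rfl⟩, rfl⟩ := hp
      refine ⟨(k : ℝ), ?_⟩
      funext i
      simp only [intVec, hf, vadd_eq_add, Pi.add_apply, Pi.smul_apply, smul_eq_mul]
      push_cast
      ring


end
end

section
/- Let ℓ be a positive integer, let T_ℓ be the lattice triangle with vertices (0,0), (ℓ,0) and (0,ℓ), and let S_ℓ be the lattice square with vertices (0,0), (ℓ,0), (ℓ,ℓ) and (0,ℓ). Then for every integer k with ℓ ≤ k ≤ ℓ², there exists a 2-dimensional convex lattice polytope P satisfying T_ℓ ⊂ P ⊆ S_ℓ and v(P) = (ℓ² + k)/2. -/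
open MeasureTheory

noncomputable section

/-!
The polygons are the square `[0, ℓ]²` with its corner `(ℓ, ℓ)` cut off along a broken line
`(ℓ, b) – (c, d) – (a, ℓ)`: the hexagons with vertices `(0, 0), (ℓ, 0), (ℓ, b), (c, d), (a, ℓ),
(0, ℓ)`. When such a hexagon is convex it is the region under the concave piecewise linear
function through its upper vertices, so its area is a sum of three trapezoids,
`ℓ² - ((ℓ - a)(ℓ - d) + (ℓ - b)(ℓ - c)) / 2`. Writing `k = qℓ + r` with `0 ≤ r < ℓ`, the hexagon
`(a, b, c, d) = (0, q, 0, ℓ)` has the right area when `r = 0`; otherwise, with `n = ℓ - q` and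
`r - 1 = en + f`, `0 ≤ f < n`, the hexagon `(e, e + 1, ℓ - 1 - f, q + 1 + f)` has it.
The triangle and the square are degenerate hexagons, so `T_ℓ ≠ P` follows by comparing areas, and
`P` is full-dimensional because it has positive area.
-/

open Set

/-- Division by zero makes `chord x₁ y₁ x₁ y₂` the constant function `y₁`. -/
def chord (x₁ y₁ x₂ y₂ x : ℝ) : ℝ := y₁ + (y₂ - y₁) / (x₂ - x₁) * (x - x₁)

lemma continuous_chord (x₁ y₁ x₂ y₂ : ℝ) : Continuous (chord x₁ y₁ x₂ y₂) := by
  unfold chord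
  fun_prop

lemma concaveOn_chord (x₁ y₁ x₂ y₂ : ℝ) {s : Set ℝ} (hs : Convex ℝ s) :
    ConcaveOn ℝ s (chord x₁ y₁ x₂ y₂) :=
  ⟨hs, fun x _ y _ p q _ _ hpq => le_of_eq <| by
    simp only [chord, smul_eq_mul]
    linear_combination (y₁ - (y₂ - y₁) / (x₂ - x₁) * x₁) * hpq⟩

lemma integral_chord (x₁ y₁ x₂ y₂ : ℝ) :
    ∫ x in x₁..x₂, chord x₁ y₁ x₂ y₂ x = (x₂ - x₁) * (y₁ + y₂) / 2 := by
  rcases eq_or_ne x₂ x₁ with rfl | h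
  · simp
  have hlin : ∫ x in x₁..x₂, (y₂ - y₁) / (x₂ - x₁) * (x - x₁) = (y₂ - y₁) * (x₂ - x₁) / 2 := by
    rw [intervalIntegral.integral_const_mul, intervalIntegral.integral_comp_sub_right fun x => x,
      integral_id]
    field_simp [sub_ne_zero.2 h]
    ring
  simp only [chord]
  rw [intervalIntegral.integral_add (f := fun _ => y₁) intervalIntegrable_const
      ((by fun_prop : Continuous fun x => (y₂ - y₁) / (x₂ - x₁) * (x - x₁)).intervalIntegrable _ _),
    hlin, intervalIntegral.integral_const, smul_eq_mul]
  ring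

lemma Convex.lineMap_mem_fin_two {C : Set (Fin 2 → ℝ)} (hC : Convex ℝ C) {x₁ y₁ x₂ y₂ t : ℝ}
    (h₁ : ![x₁, y₁] ∈ C) (h₂ : ![x₂, y₂] ∈ C) (ht : t ∈ Icc 0 1) :
    ![(1 - t) * x₁ + t * x₂, (1 - t) * y₁ + t * y₂] ∈ C := by
  simpa only [AffineMap.lineMap_apply_module, Matrix.smul_cons, Matrix.smul_empty,
    Matrix.cons_add_cons, Matrix.empty_add_empty, smul_eq_mul] using hC.lineMap_mem h₁ h₂ ht

lemma Convex.chord_mem {C : Set (Fin 2 → ℝ)} (hC : Convex ℝ C) {x₁ y₁ x₂ y₂ x : ℝ}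
    (h₁ : ![x₁, y₁] ∈ C) (h₂ : ![x₂, y₂] ∈ C) (hx : x ∈ Icc x₁ x₂) :
    ![x, chord x₁ y₁ x₂ y₂ x] ∈ C := by
  obtain ⟨hx₁, hx₂⟩ := hx
  have ht : (x - x₁) / (x₂ - x₁) ∈ Icc (0 : ℝ) 1 :=
    ⟨div_nonneg (by linarith) (by linarith), div_le_one_of_le₀ (by linarith) (by linarith)⟩
  have hcancel : (x - x₁) / (x₂ - x₁) * (x₂ - x₁) = x - x₁ :=
    div_mul_cancel_of_imp fun h => by linarith
  convert hC.lineMap_mem_fin_two h₁ h₂ ht using 3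
  · linear_combination -hcancel
  · simp only [chord]
    ring

def regionUnder (L : ℝ) (F : ℝ → ℝ) : Set (Fin 2 → ℝ) :=
  {p | p 0 ∈ Icc 0 L ∧ p 1 ∈ Icc 0 (F (p 0))}

section regionUnder

variable {L : ℝ} {F G : ℝ → ℝ}

lemma regionUnder_mono (h : ∀ x ∈ Icc 0 L, F x ≤ G x) : regionUnder L F ⊆ regionUnder L G :=
  fun _ ⟨hx, hy₀, hy⟩ => ⟨hx, hy₀, hy.trans (h _ hx)⟩

lemma convex_regionUnder (hF : ConcaveOn ℝ (Icc 0 L) F) : Convex ℝ (regionUnder L F) := by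
  have hR : regionUnder L F = (LinearEquiv.finTwoArrow ℝ ℝ : (Fin 2 → ℝ) →ₗ[ℝ] ℝ × ℝ) ⁻¹'
      ({q | q.1 ∈ Icc 0 L ∧ q.2 ≤ F q.1} ∩ {q | 0 ≤ q.2}) := by
    ext p
    simp only [regionUnder, mem_Icc, mem_ofPred_eq, LinearEquiv.coe_coe,
      LinearEquiv.finTwoArrow_apply, preimage_inter, preimage_ofPred_eq, mem_inter_iff]
    tauto
  rw [hR]
  exact (hF.convex_hypograph.inter
    (convex_halfSpace_ge (LinearMap.snd ℝ ℝ ℝ).isLinear 0)).linear_preimage _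

lemma regionUnder_subset_convexHull {s : Set (Fin 2 → ℝ)}
    (hbot : ∀ x ∈ Icc 0 L, ![x, 0] ∈ convexHull ℝ s)
    (htop : ∀ x ∈ Icc 0 L, ∃ y, F x ≤ y ∧ ![x, y] ∈ convexHull ℝ s) :
    regionUnder L F ⊆ convexHull ℝ s := by
  rintro p ⟨hx, hp₀, hp⟩
  obtain ⟨y, hFy, hxy⟩ := htop _ hx
  have hpy : p 1 ≤ y := hp.trans hFy
  have ht : p 1 / y ∈ Icc (0 : ℝ) 1 :=
    ⟨div_nonneg hp₀ (hp₀.trans hpy), div_le_one_of_le₀ hpy (hp₀.trans hpy)⟩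
  have hcancel : p 1 / y * y = p 1 :=
    div_mul_cancel_of_imp fun h => le_antisymm (h ▸ hpy) hp₀
  convert (convex_convexHull ℝ s).lineMap_mem_fin_two (hbot _ hx) hxy ht using 1
  ext i
  fin_cases i
  · simp only [Fin.zero_eta, Matrix.cons_val_zero]
    ring
  · simp only [Fin.mk_one, Matrix.cons_val_one, Matrix.cons_val_fin_one]
    linear_combination -hcancel

lemma volume_regionUnder (hL : 0 ≤ L) (hF : Continuous F) (hF₀ : ∀ x ∈ Icc 0 L, 0 ≤ F x) :
    volume (regionUnder L F) = ENNReal.ofReal (∫ x in 0..L, F x) := by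
  set R : Set (ℝ × ℝ) := {q | q.1 ∈ Icc 0 L ∧ q.2 ∈ Icc ((fun _ => (0 : ℝ)) q.1) (F q.1)}
  have hR : MeasurableSet R :=
    measurableSet_region_between_cc measurable_const hF.measurable measurableSet_Icc
  have hslice : (fun x => volume (Prod.mk x ⁻¹' R)) =
      (Icc 0 L).indicator fun x => ENNReal.ofReal (F x) := by
    ext x
    by_cases hx : x ∈ Icc 0 L
    · have : Prod.mk x ⁻¹' R = Icc 0 (F x) := by ext y; simp [R, hx.1, hx.2]
      simp [this, hx]
    · have : Prod.mk x ⁻¹' R = ∅ := by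
        ext y
        simpa [R] using fun h₀ hL _ => (hx ⟨h₀, hL⟩).elim
      simp [this, hx]
  rw [show regionUnder L F = MeasurableEquiv.finTwoArrow ⁻¹' R from rfl,
    (volume_preserving_finTwoArrow ℝ).measure_preimage hR.nullMeasurableSet,
    Measure.volume_eq_prod, Measure.prod_apply hR, hslice, lintegral_indicator measurableSet_Icc,
    ← ofReal_integral_eq_lintegral_ofReal hF.integrableOn_Icc
      ((ae_restrict_iff' measurableSet_Icc).2 (ae_of_all _ hF₀)),
    integral_Icc_eq_integral_Ioc, ← intervalIntegral.integral_of_le hL]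

end regionUnder

/-- Together with the bounds, `convex` places `(c, d)` in the triangle `(a, L), (L, L), (L, b)`,
so the six points defining `hexagon L a b c d` are in convex position, in this order. -/
structure IsCornerCut (L a b c d : ℝ) : Prop where
  nonneg_a : 0 ≤ a
  a_le_c : a ≤ c
  c_lt : c < L
  nonneg_b : 0 ≤ b
  b_le_d : b ≤ d
  d_le : d ≤ L
  convex : (L - d) * (L - c) ≤ (d - b) * (c - a)

def hexagon (L a b c d : ℝ) : Set (Fin 2 → ℝ) :=
  convexHull ℝ {![0, 0], ![L, 0], ![L, b], ![c, d], ![a, L], ![0, L]}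

def hexagonTop (L a b c d x : ℝ) : ℝ :=
  min L (min (chord a L c d x) (chord c d L b x))

lemma continuous_hexagonTop (L a b c d : ℝ) : Continuous (hexagonTop L a b c d) :=
  continuous_const.min ((continuous_chord _ _ _ _).min (continuous_chord _ _ _ _))

lemma concaveOn_hexagonTop (L a b c d : ℝ) : ConcaveOn ℝ (Icc 0 L) (hexagonTop L a b c d) :=
  (concaveOn_const L (convex_Icc 0 L)).inf
    ((concaveOn_chord _ _ _ _ (convex_Icc 0 L)).inf (concaveOn_chord _ _ _ _ (convex_Icc 0 L)))

namespace IsCornerCut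

variable {L a b c d x : ℝ}

lemma pos_L (h : IsCornerCut L a b c d) : 0 < L :=
  h.nonneg_a.trans_lt (h.a_le_c.trans_lt h.c_lt)

lemma slope_left_nonpos (h : IsCornerCut L a b c d) : (d - L) / (c - a) ≤ 0 :=
  div_nonpos_of_nonpos_of_nonneg (by linarith [h.d_le]) (by linarith [h.a_le_c])

lemma slope_right_nonpos (h : IsCornerCut L a b c d) : (b - d) / (L - c) ≤ 0 :=
  div_nonpos_of_nonpos_of_nonneg (by linarith [h.b_le_d]) (by linarith [h.c_lt])

lemma slope_right_le_slope_left (h : IsCornerCut L a b c d) :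
    (b - d) / (L - c) ≤ (d - L) / (c - a) := by
  rcases h.a_le_c.eq_or_lt with hac | hac
  · rw [hac, sub_self, div_zero]
    exact h.slope_right_nonpos
  · rw [div_le_div_iff₀ (by linarith [h.c_lt]) (by linarith)]
    linarith [h.convex]

lemma chord_left_eq (h : IsCornerCut L a b c d) :
    chord a L c d x = d + (d - L) / (c - a) * (x - c) := by
  -- if `a = c`, then `convex` forces `d = L`
  have hcancel : (d - L) / (c - a) * (c - a) = d - L :=
    div_mul_cancel_of_imp fun hca => by
      have : (L - d) * (L - c) ≤ 0 := by simpa [hca] using h.convex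
      nlinarith [h.c_lt, h.d_le]
  simp only [chord]
  linear_combination hcancel

lemma hexagonTop_of_le (h : IsCornerCut L a b c d) (hx : x ≤ a) :
    hexagonTop L a b c d x = L := by
  have hL₁ : L ≤ chord a L c d x := by
    simp only [chord]
    nlinarith [mul_nonneg_of_nonpos_of_nonpos h.slope_left_nonpos (sub_nonpos.2 hx)]
  have h₁₂ : chord a L c d x ≤ chord c d L b x := by
    rw [h.chord_left_eq]
    simp only [chord]
    nlinarith [mul_nonpos_of_nonneg_of_nonpos (sub_nonneg.2 h.slope_right_le_slope_left)
      (by linarith [h.a_le_c] : x - c ≤ 0)]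
  exact min_eq_left (le_min hL₁ (hL₁.trans h₁₂))

lemma hexagonTop_of_mem_Icc (h : IsCornerCut L a b c d) (hx : x ∈ Icc a c) :
    hexagonTop L a b c d x = chord a L c d x := by
  have h₁L : chord a L c d x ≤ L := by
    simp only [chord]
    nlinarith [mul_nonpos_of_nonpos_of_nonneg h.slope_left_nonpos (sub_nonneg.2 hx.1)]
  have h₁₂ : chord a L c d x ≤ chord c d L b x := by
    rw [h.chord_left_eq]
    simp only [chord]
    nlinarith [mul_nonpos_of_nonneg_of_nonpos (sub_nonneg.2 h.slope_right_le_slope_left)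
      (sub_nonpos.2 hx.2)]
  rw [hexagonTop, min_eq_left h₁₂, min_eq_right h₁L]

lemma hexagonTop_of_ge (h : IsCornerCut L a b c d) (hx : c ≤ x) :
    hexagonTop L a b c d x = chord c d L b x := by
  have h₂L : chord c d L b x ≤ L := by
    simp only [chord]
    nlinarith [mul_nonpos_of_nonpos_of_nonneg h.slope_right_nonpos (sub_nonneg.2 hx), h.d_le]
  have h₂₁ : chord c d L b x ≤ chord a L c d x := by
    rw [h.chord_left_eq]
    simp only [chord]
    nlinarith [mul_nonneg (sub_nonneg.2 h.slope_right_le_slope_left) (sub_nonneg.2 hx)]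
  rw [hexagonTop, min_eq_right h₂₁, min_eq_right h₂L]

lemma hexagonTop_right (h : IsCornerCut L a b c d) : hexagonTop L a b c d L = b := by
  rw [h.hexagonTop_of_ge h.c_lt.le]
  simp [chord, div_mul_cancel₀ _ (sub_ne_zero.2 h.c_lt.ne')]

lemma hexagonTop_nonneg (h : IsCornerCut L a b c d) (hx : x ∈ Icc 0 L) :
    0 ≤ hexagonTop L a b c d x := by
  have hends := (concaveOn_hexagonTop L a b c d).ge_on_segment (left_mem_Icc.2 h.pos_L.le)
    (right_mem_Icc.2 h.pos_L.le) (by rwa [segment_eq_Icc h.pos_L.le])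
  rw [h.hexagonTop_of_le h.nonneg_a, h.hexagonTop_right] at hends
  exact (le_min h.pos_L.le h.nonneg_b).trans hends

lemma hexagon_eq (h : IsCornerCut L a b c d) :
    hexagon L a b c d = regionUnder L (hexagonTop L a b c d) := by
  set V : Set (Fin 2 → ℝ) := {![0, 0], ![L, 0], ![L, b], ![c, d], ![a, L], ![0, L]}
  apply Subset.antisymm
  · refine convexHull_min ?_ (convex_regionUnder (concaveOn_hexagonTop L a b c d))
    have hFc : hexagonTop L a b c d c = d := by simp [h.hexagonTop_of_ge le_rfl, chord]
    simp only [insert_subset_iff, singleton_subset_iff, regionUnder, mem_ofPred_eq, mem_Icc,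
      Matrix.cons_val_zero, Matrix.cons_val_one, h.hexagonTop_of_le h.nonneg_a,
      h.hexagonTop_of_le le_rfl, hFc, h.hexagonTop_right]
    obtain ⟨ha, hac, hcL, hb, hbd, hdL, -⟩ := h
    refine ⟨?_, ?_, ?_, ?_, ?_, ?_⟩ <;> refine ⟨⟨?_, ?_⟩, ?_, ?_⟩ <;> linarith
  · have hV := convex_convexHull ℝ V
    have mem : ∀ {p}, p ∈ V → p ∈ convexHull ℝ V := fun hp => subset_convexHull ℝ V hp
    refine regionUnder_subset_convexHull (fun x hx => ?_) (fun x hx => ?_)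
    · simpa [chord] using hV.chord_mem (y₁ := 0) (y₂ := 0) (mem (by simp [V]))
        (mem (by simp [V])) hx
    rcases le_total x a with hxa | hax
    · refine ⟨L, min_le_left _ _, ?_⟩
      simpa [chord] using hV.chord_mem (y₁ := L) (y₂ := L) (mem (by simp [V]))
        (mem (by simp [V])) ⟨hx.1, hxa⟩
    rcases le_total x c with hxc | hcx
    · exact ⟨_, (min_le_right _ _).trans (min_le_left _ _),
        hV.chord_mem (mem (by simp [V])) (mem (by simp [V])) ⟨hax, hxc⟩⟩
    · exact ⟨_, (min_le_right _ _).trans (min_le_right _ _),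
        hV.chord_mem (mem (by simp [V])) (mem (by simp [V])) ⟨hcx, hx.2⟩⟩

lemma volume_hexagon (h : IsCornerCut L a b c d) :
    volume (hexagon L a b c d) =
      ENNReal.ofReal (L ^ 2 - ((L - a) * (L - d) + (L - b) * (L - c)) / 2) := by
  have hF := (continuous_hexagonTop L a b c d).intervalIntegrable (μ := volume)
  rw [h.hexagon_eq, volume_regionUnder h.pos_L.le (continuous_hexagonTop L a b c d)
    fun x hx => h.hexagonTop_nonneg hx]
  congr 1
  have h₁ : ∫ x in 0..a, hexagonTop L a b c d x = a * L := by
    rw [intervalIntegral.integral_congr (g := fun _ => L) fun x hx =>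
      h.hexagonTop_of_le (uIcc_of_le h.nonneg_a ▸ hx).2]
    simp
  have h₂ : ∫ x in a..c, hexagonTop L a b c d x = (c - a) * (L + d) / 2 := by
    rw [intervalIntegral.integral_congr fun x hx =>
      h.hexagonTop_of_mem_Icc (uIcc_of_le h.a_le_c ▸ hx), integral_chord]
  have h₃ : ∫ x in c..L, hexagonTop L a b c d x = (L - c) * (d + b) / 2 := by
    rw [intervalIntegral.integral_congr fun x hx =>
      h.hexagonTop_of_ge (uIcc_of_le h.c_lt.le ▸ hx).1, integral_chord]
  rw [← intervalIntegral.integral_add_adjacent_intervals (hF 0 a) (hF a L),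
    ← intervalIntegral.integral_add_adjacent_intervals (hF a c) (hF c L), h₁, h₂, h₃]
  ring

lemma triangle {L : ℝ} (hL : 0 < L) : IsCornerCut L 0 0 0 L :=
  ⟨le_rfl, le_rfl, hL, le_rfl, hL.le, le_rfl, by simp⟩

lemma square {L : ℝ} (hL : 0 < L) : IsCornerCut L 0 L 0 L :=
  ⟨le_rfl, le_rfl, hL, hL.le, le_rfl, le_rfl, by simp⟩

lemma hexagon_subset_square (h : IsCornerCut L a b c d) :
    hexagon L a b c d ⊆ hexagon L 0 L 0 L := by
  have hsq := square h.pos_L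
  rw [h.hexagon_eq, hsq.hexagon_eq]
  refine regionUnder_mono fun x hx => ?_
  rw [hsq.hexagonTop_of_ge hx.1]
  exact (min_le_left _ _).trans_eq (by simp [chord])

end IsCornerCut

lemma convexHull_triangle_eq_hexagon (L : ℝ) :
    convexHull ℝ {![0, 0], ![L, 0], ![0, L]} = hexagon L 0 0 0 L := by
  rw [hexagon]
  congr 1
  ext p
  simp only [mem_insert_iff, mem_singleton_iff]
  tauto

lemma convexHull_square_eq_hexagon (L : ℝ) :
    convexHull ℝ {![0, 0], ![L, 0], ![L, L], ![0, L]} = hexagon L 0 L 0 L := by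
  rw [hexagon]
  congr 1
  ext p
  simp only [mem_insert_iff, mem_singleton_iff]
  tauto

lemma convexHull_triangle_subset_hexagon (L a b c d : ℝ) :
    convexHull ℝ {![0, 0], ![L, 0], ![0, L]} ⊆ hexagon L a b c d :=
  convexHull_mono (by simp [insert_subset_iff])

lemma intVec_pair (m n : ℤ) : intVec ![m, n] = ![(m : ℝ), n] := by
  ext i
  fin_cases i <;> rfl

lemma isConvexLatticePolytope_hexagon (L a b c d : ℤ) :
    IsConvexLatticePolytope 2 (hexagon L a b c d) :=
  ⟨{![0, 0], ![L, 0], ![L, b], ![c, d], ![a, L], ![0, L]}, by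
    simp [hexagon, image_insert_eq, intVec_pair]⟩

lemma isFullDim_of_volume_ne_zero {n : ℕ} {P : Set (Fin n → ℝ)} (h : volume P ≠ 0) :
    IsFullDim n P := by
  by_contra hP
  exact h (measure_mono_null (subset_affineSpan ℝ P) (Measure.addHaar_affineSubspace volume _ hP))

lemma exists_isCornerCut {ℓ k : ℕ} (hℓ : 0 < ℓ) (hk₁ : ℓ ≤ k) (hk₂ : k ≤ ℓ ^ 2) :
    ∃ a b c d : ℤ, IsCornerCut ℓ a b c d ∧
      ((ℓ : ℝ) - a) * (ℓ - d) + (ℓ - b) * (ℓ - c) + k = ℓ ^ 2 := by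
  obtain ⟨q, r, hr, rfl⟩ : ∃ q r, r < ℓ ∧ k = ℓ * q + r :=
    ⟨k / ℓ, k % ℓ, Nat.mod_lt _ hℓ, (Nat.div_add_mod k ℓ).symm⟩
  have hq : 1 ≤ q := by
    by_contra! h
    interval_cases q
    omega
  rcases Nat.eq_zero_or_pos r with rfl | hr₀
  · have hqℓ : (q : ℝ) ≤ ℓ := by exact_mod_cast (by nlinarith : q ≤ ℓ)
    refine ⟨0, q, 0, ℓ, ⟨?_, ?_, ?_, ?_, ?_, ?_, ?_⟩, ?_⟩ <;> push_cast
    · exact le_rfl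
    · exact le_rfl
    · positivity
    · positivity
    · exact hqℓ
    · exact le_rfl
    · simp
    · ring
  have hqℓ : q < ℓ := by nlinarith
  obtain ⟨n, rfl⟩ : ∃ n, ℓ = q + n := ⟨ℓ - q, by omega⟩
  obtain ⟨e, f, hf, rfl⟩ : ∃ e f, f < n ∧ r = n * e + f + 1 :=
    ⟨(r - 1) / n, (r - 1) % n, Nat.mod_lt _ (by omega), by rw [Nat.div_add_mod]; omega⟩
  -- `e < q` because `n * q ≥ n + q - 1 > r - 1`
  have he : (e : ℝ) + 1 ≤ q := by exact_mod_cast (by nlinarith : e + 1 ≤ q)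
  have hf : (f : ℝ) + 1 ≤ n := by exact_mod_cast hf
  have hef : (e : ℝ) + f + 2 ≤ q + n := by exact_mod_cast (by nlinarith : e + f + 2 ≤ q + n)
  refine ⟨e, e + 1, q + n - 1 - f, q + 1 + f, ⟨?_, ?_, ?_, ?_, ?_, ?_, ?_⟩, ?_⟩ <;> push_cast
  · positivity
  · linarith
  · linarith
  · positivity
  · linarith
  · linarith
  · nlinarith [mul_le_mul (by linarith : (1 : ℝ) + f ≤ q + 1 + f - (e + 1))
      (by linarith : (n : ℝ) - 1 - f ≤ q + n - 1 - f - e) (by linarith) (by linarith)]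
  · ring

/-- For every `ℓ ≤ k ≤ ℓ²` there is a convex lattice polygon squeezed between the
triangle `T_ℓ` and the square `S_ℓ` whose area is `(ℓ² + k)/2`. -/
theorem exists_polygon_between_triangle_and_square (ℓ : ℕ) (hℓ : 0 < ℓ)
    (k : ℕ) (hk₁ : ℓ ≤ k) (hk₂ : k ≤ ℓ ^ 2) :
    ∃ P : Set (Fin 2 → ℝ), IsConvexLatticePolytope 2 P ∧ IsFullDim 2 P ∧
      convexHull ℝ {![(0 : ℝ), 0], ![(ℓ : ℝ), 0], ![0, (ℓ : ℝ)]} ⊂ P ∧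
      P ⊆ convexHull ℝ {![(0 : ℝ), 0], ![(ℓ : ℝ), 0], ![(ℓ : ℝ), (ℓ : ℝ)], ![0, (ℓ : ℝ)]} ∧
      volume P = ENNReal.ofReal (((ℓ : ℝ) ^ 2 + (k : ℝ)) / 2) := by
  obtain ⟨a, b, c, d, h, harea⟩ := exists_isCornerCut hℓ hk₁ hk₂
  have hℓ' : (0 : ℝ) < ℓ := by exact_mod_cast hℓ
  have hk : (0 : ℝ) < k := by exact_mod_cast hℓ.trans_le hk₁
  have hvol : volume (hexagon ℓ a b c d) = ENNReal.ofReal (((ℓ : ℝ) ^ 2 + k) / 2) := by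
    rw [h.volume_hexagon]
    congr 1
    linarith
  have htri : volume (convexHull ℝ {![(0 : ℝ), 0], ![(ℓ : ℝ), 0], ![0, (ℓ : ℝ)]}) <
      volume (hexagon ℓ a b c d) := by
    rw [convexHull_triangle_eq_hexagon, (IsCornerCut.triangle hℓ').volume_hexagon, hvol,
      ENNReal.ofReal_lt_ofReal_iff (by positivity)]
    linarith
  refine ⟨hexagon ℓ a b c d, by simpa using isConvexLatticePolytope_hexagon ℓ a b c d,
    isFullDim_of_volume_ne_zero (hvol ▸ (ENNReal.ofReal_pos.2 (by positivity)).ne'),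
    ⟨convexHull_triangle_subset_hexagon _ _ _ _ _, fun hsub => (measure_mono hsub).not_gt htri⟩,
    (convexHull_square_eq_hexagon (ℓ : ℝ)).symm ▸ h.hexagon_subset_square, hvol⟩

end
end

section
/- Let d ≥ 3 and w ≥ d + 1 be integers, let k be a positive integer, and let e₁, …, e_d be the standard basis of ℝ^d. Define P(d,w,k) as the convex hull of the set {0} ∪ {e_i : 1 ≤ i ≤ d−1} ∪ {−j·e_d : 1 ≤ j ≤ w−d−1} ∪ {e₁ + ⋯ + e_{d−1} + k·e_d}. Then P(d,w,k) is a d-dimensional convex lattice polytope with exactly w lattice points, i.e. |P(d,w,k) ∩ ℤ^d| = w. -/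
/-!
Write `d = n + 1` and `m = w - d - 1`. `P(d,w,k)` is the convex hull of the `w` lattice points `0`,
`e₁, …, eₙ`, `-e_d, …, -m e_d` and the apex `(1, …, 1, k)`, so it suffices to show that these are
its only lattice points. Linear inequalities checked on these generators give, for a lattice point
`x` of `P`, that each `xᵢ` (`i ≤ n`) is `0` or `1` and `x_d ≤ k xᵢ`. If all `xᵢ = 1`, the inequality
`(k + m)(∑ xᵢ - n) + k ≤ x_d` forces `x_d = k`. Otherwise some `xᵢ = 0`, so `x_d ≤ 0` and
`∑ xₗ ≤ 1 + (n - 1) xᵢ = 1`, and `m (xₗ - 1) ≤ x_d` for all `l` leaves only `0`, the `eₗ` and the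
`-j e_d`. For full dimension, `0`, the `eᵢ` and the apex already span `ℝ^d` because `k ≠ 0`.
-/

open MeasureTheory

noncomputable section

/-- The polytope `P(d,w,k)`: the convex hull of `0`, the basis vectors
`e₁, …, e_{d-1}`, the points `-j·e_d` for `1 ≤ j ≤ w - d - 1`, and the point
`e₁ + ⋯ + e_{d-1} + k·e_d` (here `e_d` is the last coordinate direction). -/
def Pdwk (d w : ℕ) (k : ℤ) : Set (Fin d → ℝ) :=
  convexHull ℝ ({0} ∪ {x | ∃ i : Fin d, (i : ℕ) < d - 1 ∧ x = Pi.single i 1}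
    ∪ {x | ∃ j : ℕ, 1 ≤ j ∧ j ≤ w - d - 1 ∧
        x = fun i : Fin d => if (i : ℕ) = d - 1 then -(j : ℝ) else 0}
    ∪ {fun i : Fin d => if (i : ℕ) = d - 1 then (k : ℝ) else 1})

open Finset

def pdwkVertices (n m : ℕ) (k : ℤ) : Finset (Fin (n + 1) → ℤ) :=
  {0} ∪ univ.image (fun i : Fin n => Pi.single i.castSucc 1) ∪
    (Icc 1 m).image (fun j : ℕ => Pi.single (Fin.last n) (-(j : ℤ))) ∪ {Fin.snoc 1 k}

lemma intVec_zero {d : ℕ} : intVec (0 : Fin d → ℤ) = 0 := by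
  ext; simp [intVec]

lemma intVec_single {d : ℕ} (i : Fin d) (a : ℤ) : intVec (Pi.single i a) = Pi.single i (a : ℝ) := by
  ext j; by_cases h : j = i <;> simp [intVec, h]

lemma Pdwk_succ_eq_convexHull (n w : ℕ) (k : ℤ) :
    Pdwk (n + 1) w k = convexHull ℝ (intVec '' ↑(pdwkVertices n (w - (n + 1) - 1) k)) := by
  have hlast (i : Fin (n + 1)) : (i : ℕ) = n + 1 - 1 ↔ i = Fin.last n := by
    simp [Fin.ext_iff]
  have hlt (i : Fin (n + 1)) : (i : ℕ) < n + 1 - 1 ↔ i ≠ Fin.last n := by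
    simp [Fin.ext_iff, Nat.lt_iff_le_and_ne, Fin.is_le]
  have hsingle (c : ℝ) : (fun i => if i = Fin.last n then c else 0) = Pi.single (Fin.last n) c :=
    funext fun i => (Pi.single_apply _ _ _).symm
  unfold Pdwk
  simp only [pdwkVertices, coe_union, coe_singleton, coe_image, coe_univ, coe_Icc, Set.image_union,
    Set.image_singleton, Set.image_image, hlast, hlt, intVec_zero, intVec_single, hsingle]
  congr 4
  · ext x; simp [← Fin.exists_castSucc_eq, eq_comm]
  · ext x; simp [and_assoc, eq_comm]
  · ext i; cases i using Fin.lastCases <;> simp [intVec]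

variable {n m : ℕ} {k : ℤ}

lemma le_of_intVec_mem_convexHull_pdwkVertices (i₀ : Fin n) {a b c C : ℤ} (h0 : 0 ≤ C)
    (hbase₀ : a + c ≤ C) (hbase : c ≤ C) (hspine : ∀ j : ℕ, 1 ≤ j → j ≤ m → -(b * j) ≤ C)
    (hapex : a + b * k + c * n ≤ C) {x : Fin (n + 1) → ℤ}
    (hx : intVec x ∈ convexHull ℝ (intVec '' ↑(pdwkVertices n m k))) :
    a * x i₀.castSucc + b * x (Fin.last n) + c * ∑ i : Fin n, x i.castSucc ≤ C := by
  let f : (Fin (n + 1) → ℝ) → ℝ := fun y =>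
    a * y i₀.castSucc + b * y (Fin.last n) + c * ∑ i : Fin n, y i.castSucc
  have hf : IsLinearMap ℝ f :=
    ⟨fun y z => by simp only [f, Pi.add_apply, sum_add_distrib]; ring,
      fun r y => by simp only [f, Pi.smul_apply, smul_eq_mul, ← mul_sum]; ring⟩
  have hV : intVec '' ↑(pdwkVertices n m k) ⊆ {y | f y ≤ C} := by
    rintro _ ⟨v, hv, rfl⟩
    simp only [pdwkVertices, coe_union, coe_singleton, coe_image, coe_univ, coe_Icc, Set.mem_union,
      Set.mem_singleton_iff, Set.mem_image, Set.mem_univ, true_and, Set.mem_Icc] at hv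
    rcases hv with ((rfl | ⟨i, rfl⟩) | ⟨j, ⟨hj1, hj2⟩, rfl⟩) | rfl
    · simpa [f, intVec_zero] using h0
    · by_cases hi : i = i₀
      · subst hi
        simpa [f, intVec_single, Pi.single_apply] using (mod_cast hbase₀ : (a : ℝ) + c ≤ C)
      · simpa [f, intVec_single, Pi.single_apply, Ne.symm hi] using (mod_cast hbase : (c : ℝ) ≤ C)
    · simpa [f, intVec_single] using (mod_cast hspine j hj1 hj2 : -((b : ℝ) * j) ≤ C)
    · simpa [f, intVec] using (mod_cast hapex : (a : ℝ) + b * k + c * n ≤ C)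
  have := convexHull_min hV (convex_halfSpace_le hf C) hx
  simp only [Set.mem_ofPred_eq, f, intVec] at this
  exact_mod_cast this

lemma eq_zero_or_eq_single_of_sum_le_one {ι : Type*} [Fintype ι] [DecidableEq ι] {y : ι → ℤ}
    (hy : ∀ i, 0 ≤ y i) (hsum : ∑ i, y i ≤ 1) : y = 0 ∨ ∃ i, y = Pi.single i 1 := by
  by_cases h : y = 0
  · exact Or.inl h
  obtain ⟨i, hi⟩ := Function.ne_iff.mp h
  have hi₁ : 1 ≤ y i := by have := hy i; rw [Pi.zero_apply] at hi; omega
  have hle : y i ≤ ∑ j, y j := single_le_sum (fun j _ => hy j) (mem_univ i)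
  have hpair (j : ι) (hj : j ≠ i) : y j + y i ≤ ∑ j, y j := by
    rw [← sum_pair hj]
    exact sum_le_sum_of_subset_of_nonneg (subset_univ _) fun j _ _ => hy j
  refine Or.inr ⟨i, funext fun j => ?_⟩
  by_cases hj : j = i
  · rw [hj, Pi.single_eq_same]
    omega
  · have := hpair j hj
    have := hy j
    rw [Pi.single_eq_of_ne hj]
    omega

lemma mem_pdwkVertices_of_le (hn : 0 < n) {x : Fin (n + 1) → ℤ}
    (hnonneg : ∀ i : Fin n, 0 ≤ x i.castSucc) (hle_one : ∀ i : Fin n, x i.castSucc ≤ 1)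
    (hlast_le : ∀ i : Fin n, x (Fin.last n) ≤ k * x i.castSucc)
    (hlast_ge : ∀ i : Fin n, m * x i.castSucc - m ≤ x (Fin.last n))
    (hsum_le : ∀ i : Fin n, ∑ j : Fin n, x j.castSucc ≤ 1 + (n - 1) * x i.castSucc)
    (hlast_ge_apex : (k + m) * ∑ j : Fin n, x j.castSucc - ((k + m) * n - k) ≤ x (Fin.last n)) :
    x ∈ pdwkVertices n m k := by
  simp only [pdwkVertices, mem_union, mem_singleton, mem_image, mem_univ, true_and, mem_Icc]
  by_cases hall : ∀ i : Fin n, x i.castSucc = 1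
  · have hS : ∑ j : Fin n, x j.castSucc = n := by simp [hall]
    have ht : x (Fin.last n) = k := by
      have := hlast_le ⟨0, hn⟩
      rw [hall, mul_one] at this
      rw [hS] at hlast_ge_apex
      linarith
    right
    funext i
    cases i using Fin.lastCases <;> simp [hall, ht]
  obtain ⟨i, hi⟩ := not_forall.mp hall
  have hi₀ : x i.castSucc = 0 := by have := hnonneg i; have := hle_one i; omega
  have hlast_nonpos : x (Fin.last n) ≤ 0 := by simpa [hi₀] using hlast_le i
  rcases eq_zero_or_eq_single_of_sum_le_one hnonneg (by simpa [hi₀] using hsum_le i)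
    with hy | ⟨i₁, hy⟩
  · have hy (j : Fin n) : x j.castSucc = 0 := congrFun hy j
    have hlast_ge_m : -(m : ℤ) ≤ x (Fin.last n) := by simpa [hi₀] using hlast_ge i
    rcases hlast_nonpos.eq_or_lt with ht | ht
    · left; left; left
      funext i
      cases i using Fin.lastCases <;> simp [hy, ht]
    · left; right
      obtain ⟨j, hj⟩ : ∃ j : ℕ, x (Fin.last n) = -j := ⟨(-x (Fin.last n)).toNat, by omega⟩
      refine ⟨j, ⟨by omega, by omega⟩, funext fun i => ?_⟩
      cases i using Fin.lastCases <;> simp [hy, hj]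
  · have hy (j : Fin n) : x j.castSucc = (Pi.single i₁ 1 : Fin n → ℤ) j := congrFun hy j
    have ht : x (Fin.last n) = 0 := le_antisymm hlast_nonpos (by simpa [hy] using hlast_ge i₁)
    left; left; right
    refine ⟨i₁, funext fun i => ?_⟩
    cases i using Fin.lastCases <;> simp [hy, ht, Pi.single_apply]

lemma mem_pdwkVertices_of_intVec_mem_convexHull (hn : 2 ≤ n) (hk : 0 < k) {x : Fin (n + 1) → ℤ}
    (hx : intVec x ∈ convexHull ℝ (intVec '' ↑(pdwkVertices n m k))) :
    x ∈ pdwkVertices n m k := by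
  refine mem_pdwkVertices_of_le (by omega) (fun i => ?_) (fun i => ?_) (fun i => ?_) (fun i => ?_)
    (fun i => ?_) ?_
  · linarith [le_of_intVec_mem_convexHull_pdwkVertices i (a := -1) (b := 0) (c := 0) le_rfl
      (by norm_num) le_rfl (by simp) (by simp) hx]
  · linarith [le_of_intVec_mem_convexHull_pdwkVertices i (a := 1) (b := 0) (c := 0) zero_le_one
      (by norm_num) zero_le_one (by simp) (by simp) hx]
  · linarith [le_of_intVec_mem_convexHull_pdwkVertices i (a := -k) (b := 1) (c := 0) le_rfl
      (by linarith) le_rfl (fun j _ _ => by simp) (by simp) hx]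
  · linarith [le_of_intVec_mem_convexHull_pdwkVertices i (a := m) (b := -1) (c := 0) (C := m)
      (by positivity) (by simp) (by positivity) (fun j _ hj => by simpa using hj) (by linarith) hx]
  · linarith [le_of_intVec_mem_convexHull_pdwkVertices i (a := -(n - 1)) (b := 0) (c := 1)
      zero_le_one (by linarith) le_rfl (by simp) (by linarith) hx]
  · have hn₂ : (2 : ℤ) ≤ n := by exact_mod_cast hn
    linarith [le_of_intVec_mem_convexHull_pdwkVertices ⟨0, by omega⟩ (a := 0) (b := -1)
      (c := k + m) (C := (k + m) * n - k) (by nlinarith) (by nlinarith) (by nlinarith)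
      (fun j _ hj => by nlinarith [(by exact_mod_cast hj : (j : ℤ) ≤ m)]) (by linarith) hx]

lemma latticePts_convexHull_pdwkVertices (hn : 2 ≤ n) (hk : 0 < k) :
    latticePts (n + 1) (convexHull ℝ (intVec '' ↑(pdwkVertices n m k))) = pdwkVertices n m k :=
  Set.Subset.antisymm (fun _ hx => mem_pdwkVertices_of_intVec_mem_convexHull hn hk hx)
    fun _ hx => subset_convexHull ℝ _ (Set.mem_image_of_mem intVec hx)

lemma card_pdwkVertices (hk : 0 < k) : (pdwkVertices n m k).card = n + m + 2 := by
  have hbase :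
      (univ.image fun i : Fin n => (Pi.single i.castSucc 1 : Fin (n + 1) → ℤ)).card = n := by
    refine (card_image_of_injective _ fun i j h => ?_).trans (card_fin n)
    simpa [Pi.single_apply] using congrFun h i.castSucc
  have hspine : ((Icc 1 m).image fun j : ℕ =>
      (Pi.single (Fin.last n) (-(j : ℤ)) : Fin (n + 1) → ℤ)).card = m :=
    (card_image_of_injective _ fun i j h => by simpa using h).trans (by simp)
  rw [pdwkVertices, card_union_of_disjoint, card_union_of_disjoint, card_union_of_disjoint,
    card_singleton, card_singleton, hbase, hspine]
  · ring
  · simp [disjoint_singleton_left]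
  · simp only [disjoint_left, mem_union, mem_singleton, mem_image, mem_univ, true_and, mem_Icc]
    rintro _ (rfl | ⟨i, rfl⟩) ⟨j, hj, h⟩ <;> have := congrFun h (Fin.last n) <;>
      simp at this <;> omega
  · simp only [disjoint_singleton_right, mem_union, mem_singleton, mem_image, mem_univ, true_and,
      mem_Icc]
    rintro ((h | ⟨i, h⟩) | ⟨j, hj, h⟩) <;> have := congrFun h (Fin.last n) <;>
      simp at this <;> omega

lemma affineSpan_convexHull_pdwkVertices (hk : k ≠ 0) :
    affineSpan ℝ (convexHull ℝ (intVec '' (pdwkVertices n m k : Set (Fin (n + 1) → ℤ)))) = ⊤ := by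
  set G := intVec '' (pdwkVertices n m k : Set (Fin (n + 1) → ℤ))
  have hG {v : Fin (n + 1) → ℤ} (hv : v ∈ pdwkVertices n m k) : intVec v ∈ Submodule.span ℝ G :=
    Submodule.subset_span (Set.mem_image_of_mem _ hv)
  have hbase (i : Fin n) : Pi.single i.castSucc (1 : ℝ) ∈ Submodule.span ℝ G := by
    simpa [intVec_single] using hG (v := Pi.single i.castSucc 1) (by simp [pdwkVertices])
  have hapex : intVec (Fin.snoc 1 k : Fin (n + 1) → ℤ) =
      ∑ i : Fin n, Pi.single i.castSucc (1 : ℝ) + (k : ℝ) • Pi.single (Fin.last n) 1 := by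
    funext i
    cases i using Fin.lastCases <;> simp [intVec, Finset.sum_apply, Pi.single_apply]
  have hlast : Pi.single (Fin.last n) (1 : ℝ) ∈ Submodule.span ℝ G := by
    have := hG (v := Fin.snoc 1 k) (by simp [pdwkVertices])
    rw [hapex, add_mem_cancel_left (Submodule.sum_mem _ fun i _ => hbase i)] at this
    simpa [hk] using (Submodule.smul_mem_iff _ (Int.cast_ne_zero.mpr hk)).mp this
  have hspan : Submodule.span ℝ G = ⊤ := by
    rw [eq_top_iff, ← (Pi.basisFun ℝ (Fin (n + 1))).span_eq, Submodule.span_le]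
    rintro _ ⟨i, rfl⟩
    cases i using Fin.lastCases <;> simp [hbase, hlast]
  have h0 : (0 : Fin (n + 1) → ℝ) ∈ G := ⟨0, by simp [pdwkVertices], intVec_zero⟩
  rw [affineSpan_convexHull, AffineSubspace.affineSpan_eq_top_iff_vectorSpan_eq_top_of_nonempty
    ℝ _ _ ⟨0, h0⟩, vectorSpan_eq_span_vsub_set_right ℝ h0]
  simpa using hspan

/-- For `d ≥ 3`, `w ≥ d + 1` and `k ≥ 1`, the polytope `P(d,w,k)` is a
`d`-dimensional convex lattice polytope with exactly `w` lattice points. -/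
theorem Pdwk_is_polytope_card (d w : ℕ) (k : ℤ) (hd : 3 ≤ d) (hw : d + 1 ≤ w)
    (hk : 0 < k) :
    IsConvexLatticePolytope d (Pdwk d w k) ∧ IsFullDim d (Pdwk d w k) ∧
      (latticePts d (Pdwk d w k)).ncard = w := by
  obtain ⟨n, rfl⟩ : ∃ n, d = n + 1 := ⟨d - 1, by omega⟩
  rw [Pdwk_succ_eq_convexHull]
  refine ⟨⟨_, rfl⟩, affineSpan_convexHull_pdwkVertices hk.ne', ?_⟩
  rw [latticePts_convexHull_pdwkVertices (by omega) hk, Set.ncard_coe_finset, card_pdwkVertices hk]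
  omega

end
end

section
/- Let d ≥ 3 and w ≥ d + 1 be integers, let e₁, …, e_d be the standard basis of ℝ^d, and define P(d,w,k) as the convex hull of the set {0} ∪ {e_i : 1 ≤ i ≤ d−1} ∪ {−j·e_d : 1 ≤ j ≤ w−d−1} ∪ {e₁ + ⋯ + e_{d−1} + k·e_d}. If k ≥ (d−2)(w−d−1), then v(P(d,w,k)) = (k + w − d − 1)/d!. -/
/-!
The hyperplane `x_d = 0` cuts `P(d,w,k)` into `S₊ = conv(0, e₁, …, e_{d-1}, v)` with
`v = e₁ + ⋯ + e_{d-1} + k e_d` and `S₋ = conv(0, e₁, …, e_{d-1}, -m e_d)` with `m = w - d - 1`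
(the points `-j e_d` lie on the segment `[0, -m e_d]`). These are the images of the corner simplex
`{x ≥ 0, ∑ xᵢ ≤ 1}`, of volume `1/d!`, under linear maps of determinant `k` and `-m`, and they
meet in a null set. For `P(d,w,k) ⊆ S₊ ∪ S₋`, let `H` be the polyhedron cut out by the facet
inequalities of `S₊` and `S₋` other than `x_d ≥ 0` and `x_d ≤ 0`: it is convex, its two halves
`x_d ≥ 0` and `x_d ≤ 0` lie in `S₊` and `S₋`, and `k ≥ (d-2) m` says exactly that `v` and
`-m e_d` satisfy the facet inequality opposite `0` of the other simplex, so `H` contains every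
vertex of `P(d,w,k)`.
-/

open MeasureTheory

noncomputable section

open Finset

def cornerSimplex (ι : Type*) [Fintype ι] (c : ℝ) : Set (ι → ℝ) :=
  {x | (∀ i, 0 ≤ x i) ∧ ∑ i, x i ≤ c}

section CornerSimplex

variable {ι : Type*} [Fintype ι]

theorem cornerSimplex_eq_empty {c : ℝ} (hc : c < 0) : cornerSimplex ι c = ∅ :=
  Set.eq_empty_of_forall_notMem fun _ ⟨hx, hs⟩ =>
    (hs.trans_lt hc).not_ge (sum_nonneg fun i _ => hx i)

theorem convex_cornerSimplex (c : ℝ) : Convex ℝ (cornerSimplex ι c) := by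
  rintro x ⟨hx, hxs⟩ y ⟨hy, hys⟩ a b ha hb hab
  refine ⟨fun i => ?_, ?_⟩
  · simp only [Pi.add_apply, Pi.smul_apply, smul_eq_mul]
    have := hx i; have := hy i; positivity
  · simp only [Pi.add_apply, Pi.smul_apply, smul_eq_mul, sum_add_distrib, ← mul_sum]
    calc _ ≤ a * c + b * c := by gcongr
      _ = c := by rw [← add_mul, hab, one_mul]

theorem cornerSimplex_one_eq_convexHull [DecidableEq ι] :
    cornerSimplex ι 1 = convexHull ℝ ({0} ∪ Set.range fun i => Pi.single i 1) := by
  refine subset_antisymm ?_ (convexHull_min ?_ (convex_cornerSimplex 1))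
  · rintro x ⟨hx, hxs⟩
    -- `x = (1 - ∑ xᵢ) • 0 + ∑ xᵢ • eᵢ`, a convex combination indexed by `Option ι`
    have := (convex_convexHull ℝ ({0} ∪ Set.range fun i : ι => (Pi.single i 1 : ι → ℝ))).sum_mem
      (t := univ) (w := fun o => Option.elim o (1 - ∑ i, x i) x)
      (z := fun o => Option.elim o 0 fun i => Pi.single i 1)
      (by rintro (_ | i) _ <;> simp [hxs, hx])
      (by simp [Fintype.sum_option])
      (by rintro (_ | i) _ <;> apply subset_convexHull <;> simp)
    simp only [Fintype.sum_option, Option.elim, smul_zero, zero_add] at this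
    rwa [pi_eq_sum_univ' x]
  · rintro _ (rfl | ⟨i, rfl⟩)
    · simp [cornerSimplex]
    · refine ⟨fun j => ?_, by simp⟩
      simp only [Pi.single_apply]
      split_ifs <;> norm_num

end CornerSimplex

theorem cornerSimplex_succ_eq_preimage (n : ℕ) (c : ℝ) :
    cornerSimplex (Fin (n + 1)) c = MeasurableEquiv.piFinSuccAbove (fun _ => ℝ) 0 ⁻¹'
      {p | 0 ≤ p.1 ∧ p.2 ∈ cornerSimplex (Fin n) (c - p.1)} := by
  ext x
  simp [cornerSimplex, Fin.forall_fin_succ, Fin.sum_univ_succ, le_sub_iff_add_le', and_assoc,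
    Fin.tail]

theorem volume_cornerSimplex (n : ℕ) {c : ℝ} (hc : 0 ≤ c) :
    volume (cornerSimplex (Fin n) c) = ENNReal.ofReal (c ^ n / n.factorial) := by
  induction n generalizing c with
  | zero =>
    have : cornerSimplex (Fin 0) c = Set.univ := by ext; simp [cornerSimplex, hc]
    rw [this, volume_pi, Measure.pi_univ]
    simp
  | succ n ih =>
    set T : Set (ℝ × (Fin n → ℝ)) := {p | 0 ≤ p.1 ∧ p.2 ∈ cornerSimplex (Fin n) (c - p.1)}
    have hT : MeasurableSet T := by
      simp only [T, cornerSimplex]; measurability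
    have hslice : ∀ t, volume (Prod.mk t ⁻¹' T) =
        (Set.Icc 0 c).indicator (fun t => ENNReal.ofReal ((c - t) ^ n / n.factorial)) t := by
      intro t
      rcases lt_or_ge t 0 with ht | ht
      · simp [T, ht.not_ge, Set.indicator_of_notMem]
      rcases le_or_gt t c with htc | htc
      · simp [T, ht, htc, ih (sub_nonneg.2 htc)]
      · simp [T, ht, htc.not_ge, cornerSimplex_eq_empty (sub_neg.2 htc)]
    rw [cornerSimplex_succ_eq_preimage, (volume_preserving_piFinSuccAbove _ 0).measure_preimage
      hT.nullMeasurableSet, Measure.volume_eq_prod, Measure.prod_apply hT]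
    simp_rw [hslice]
    rw [lintegral_indicator measurableSet_Icc, ← ofReal_integral_eq_lintegral_ofReal]
    · congr 1
      rw [integral_Icc_eq_integral_Ioc, ← intervalIntegral.integral_of_le hc,
        intervalIntegral.integral_div, intervalIntegral.integral_comp_sub_left (fun t => t ^ n)]
      simp [Nat.factorial_succ]
      field_simp
    · exact (by fun_prop : Continuous fun t : ℝ => (c - t) ^ n / n.factorial).integrableOn_Icc
    · exact ae_restrict_of_forall_mem measurableSet_Icc fun t ht =>
        div_nonneg (pow_nonneg (sub_nonneg.2 ht.2) n) (Nat.cast_nonneg _)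

section ApexSimplex

variable {ι : Type*} [Fintype ι] [DecidableEq ι] (L : ι)

def apexSimplex (u : ι → ℝ) : Set (ι → ℝ) :=
  convexHull ℝ ({0} ∪ {x | ∃ i ≠ L, x = Pi.single i 1} ∪ {u})

def apexMap (u : ι → ℝ) : (ι → ℝ) →ₗ[ℝ] ι → ℝ :=
  Matrix.toLin' ((1 : Matrix ι ι ℝ).updateCol L u)

def offSum : (ι → ℝ) →ₗ[ℝ] ℝ := ∑ i ∈ univ.erase L, LinearMap.proj i

@[simp]
theorem offSum_apply (x : ι → ℝ) : offSum L x = ∑ i ∈ univ.erase L, x i := by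
  simp [offSum]

variable {L}

theorem apexMap_apply (u c : ι → ℝ) : apexMap L u c = c L • u + Function.update c L 0 := by
  ext r
  rw [apexMap, Matrix.toLin'_apply, Matrix.mulVec, dotProduct]
  simp [Matrix.updateCol_apply, Matrix.one_apply, Function.update_apply, mul_comm, sum_ite,
    filter_eq', filter_ne']

theorem det_apexMap (u : ι → ℝ) : LinearMap.det (apexMap L u) = u L := by
  rw [apexMap, LinearMap.det_toLin', ← Matrix.cramer_apply, Matrix.cramer_one]
  rfl

theorem apexMap_single (u : ι → ℝ) (i : ι) :
    apexMap L u (Pi.single i 1) = if i = L then u else Pi.single i 1 := by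
  rw [apexMap_apply]
  split_ifs with h
  · subst h
    simp [Pi.single, Function.update_idem]
  · simp [Ne.symm h]

theorem image_apexMap_cornerSimplex (u : ι → ℝ) :
    apexMap L u '' cornerSimplex ι 1 = apexSimplex L u := by
  rw [cornerSimplex_one_eq_convexHull, LinearMap.image_convexHull, apexSimplex]
  congr 1
  ext x
  simp only [Set.image_union, Set.image_singleton, map_zero, ← Set.range_comp,
    Function.comp_def, apexMap_single]
  constructor
  · rintro (rfl | ⟨i, rfl⟩)
    · simp
    · by_cases h : i = L
      · simp [h]
      · exact Or.inl (Or.inr ⟨i, h, if_neg h⟩)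
  · rintro ((rfl | ⟨i, hi, rfl⟩) | rfl)
    · exact Or.inl rfl
    · exact Or.inr ⟨i, if_neg hi⟩
    · exact Or.inr ⟨L, if_pos rfl⟩

theorem isCompact_apexSimplex (u : ι → ℝ) : IsCompact (apexSimplex L u) := by
  have hbase : {x : ι → ℝ | ∃ i ≠ L, x = Pi.single i 1}.Finite :=
    (Set.finite_range fun i => (Pi.single i 1 : ι → ℝ)).subset fun _ ⟨i, _, hx⟩ => ⟨i, hx.symm⟩
  exact (((Set.finite_singleton 0).union hbase).union (Set.finite_singleton u)).isCompact_convexHull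
    (𝕜 := ℝ)

theorem exists_nonneg_apply_eq_of_mem_apexSimplex {u x : ι → ℝ} (hx : x ∈ apexSimplex L u) :
    ∃ t : ℝ, 0 ≤ t ∧ x L = t * u L := by
  rw [← image_apexMap_cornerSimplex] at hx
  obtain ⟨c, hc, rfl⟩ := hx
  exact ⟨c L, hc.1 L, by simp [apexMap_apply]⟩

theorem mem_apexSimplex_of_le {u x : ι → ℝ} (t : ℝ) (ht : 0 ≤ t) (hle : ∀ i ≠ L, t * u i ≤ x i)
    (hsum : t + offSum L (x - t • u) ≤ 1) (hL : x L = t * u L) : x ∈ apexSimplex L u := by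
  rw [← image_apexMap_cornerSimplex]
  refine ⟨Function.update (x - t • u) L t, ⟨fun i => ?_, ?_⟩, ?_⟩
  · rcases eq_or_ne i L with rfl | hi
    · simpa using ht
    · simpa [hi] using hle i hi
  · simpa [sum_update_of_mem, sdiff_singleton_eq_erase] using hsum
  · ext r
    rcases eq_or_ne r L with rfl | hr
    · simp [apexMap_apply, hL]
    · simp [apexMap_apply, hr]

theorem aedisjoint_apexSimplex {u v : ι → ℝ} (hu : 0 ≤ u L) (hv : v L ≤ 0) :
    AEDisjoint volume (apexSimplex L u) (apexSimplex L v) := by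
  refine measure_mono_null (fun x ⟨hxu, hxv⟩ => ?_) (Measure.pi_hyperplane _ L 0)
  obtain ⟨s, hs, hsx⟩ := exists_nonneg_apply_eq_of_mem_apexSimplex hxu
  obtain ⟨t, ht, htx⟩ := exists_nonneg_apply_eq_of_mem_apexSimplex hxv
  exact le_antisymm (htx ▸ mul_nonpos_of_nonneg_of_nonpos ht hv) (hsx ▸ mul_nonneg hs hu)

end ApexSimplex

theorem volume_apexSimplex {n : ℕ} (L : Fin n) (u : Fin n → ℝ) :
    volume (apexSimplex L u) = ENNReal.ofReal (|u L| / n.factorial) := by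
  rw [← image_apexMap_cornerSimplex, Measure.addHaar_image_linearMap, det_apexMap,
    volume_cornerSimplex n zero_le_one, ← ENNReal.ofReal_mul (abs_nonneg _)]
  simp [div_eq_mul_inv]

section ApexPair

variable {ι : Type*} [Fintype ι] [DecidableEq ι] {L : ι}

theorem offSum_single_of_ne {i : ι} (hi : i ≠ L) (c : ℝ) : offSum L (Pi.single i c) = c := by
  simp [Pi.single_apply, hi]

theorem offSum_single_self (c : ℝ) : offSum L (Pi.single L c) = 0 := by
  simp +contextual [Pi.single_apply]

theorem offSum_update_one (k : ℝ) : offSum L (Function.update 1 L k) = Fintype.card ι - 1 := by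
  rw [offSum_apply, sum_congr rfl fun i hi => Function.update_of_ne (ne_of_mem_erase hi) _ _]
  simp [card_erase_of_mem, Nat.cast_pred (Fintype.card_pos_iff.2 ⟨L⟩)]

variable (L) in
def apexPairVertices (k m : ℝ) : Set (ι → ℝ) :=
  {0} ∪ {x | ∃ i ≠ L, x = Pi.single i 1} ∪ {Function.update (1 : ι → ℝ) L k} ∪ {Pi.single L (-m)}

variable (L) in
/-- The facet inequalities of `apexSimplex L (update 1 L k)` and `apexSimplex L (single L (-m))`
other than `0 ≤ x L` and `x L ≤ 0`. -/
def facetPolyhedron (k m : ℝ) : Set (ι → ℝ) :=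
  {x | (∀ i ≠ L, 0 ≤ x i ∧ x L ≤ k * x i) ∧
    k * offSum L x - (Fintype.card ι - 2) * x L ≤ k ∧ m * offSum L x - x L ≤ m}

theorem convex_facetPolyhedron (k m : ℝ) : Convex ℝ (facetPolyhedron L k m) := by
  rintro x ⟨hx, hxk, hxm⟩ y ⟨hy, hyk, hym⟩ a b ha hb hab
  obtain rfl : b = 1 - a := by linarith
  simp only [facetPolyhedron, Set.mem_ofPred_eq, map_add, map_smul, Pi.add_apply, Pi.smul_apply,
    smul_eq_mul]
  refine ⟨fun i hi => ⟨?_, ?_⟩, ?_, ?_⟩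
  · nlinarith [(hx i hi).1, (hy i hi).1]
  · nlinarith [(hx i hi).2, (hy i hi).2]
  · nlinarith
  · nlinarith

theorem vertices_subset_facetPolyhedron {k m : ℝ} (hk : 0 ≤ k) (hm : 0 ≤ m)
    (hkm : ((Fintype.card ι : ℝ) - 2) * m ≤ k) :
    apexPairVertices L k m ⊆ facetPolyhedron L k m := by
  rintro _ (((rfl | ⟨i, hi, rfl⟩) | rfl) | rfl)
  · simp [facetPolyhedron, hk, hm]
  · refine ⟨fun j hj => ?_, ?_, ?_⟩
    · rw [Pi.single_apply, Pi.single_apply, if_neg hi.symm]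
      split_ifs <;> simp [hk]
    all_goals simp [offSum_single_of_ne hi, hi.symm]
  · refine ⟨fun j hj => by simp [hj], ?_, ?_⟩ <;>
      simp only [offSum_update_one, Function.update_self] <;> linarith
  · refine ⟨fun j hj => by simp [hj, hm], ?_, ?_⟩ <;>
      simp only [offSum_single_self, Pi.single_eq_same] <;> linarith

theorem facetPolyhedron_subset_union {k m : ℝ} (hk : 0 < k) (hm : 0 ≤ m) :
    facetPolyhedron L k m ⊆
      apexSimplex L (Function.update 1 L k) ∪ apexSimplex L (Pi.single L (-m)) := by
  rintro x ⟨hx, hxk, hxm⟩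
  rcases le_or_gt 0 (x L) with hxL | hxL
  · left
    set t := x L / k
    have hxt : x L = t * k := (div_mul_cancel₀ _ hk.ne').symm
    rw [hxt] at hx hxk
    refine mem_apexSimplex_of_le t (by positivity) (fun i hi => ?_) ?_ (by simp [hxt])
    · simpa [Function.update_of_ne hi] using le_of_mul_le_mul_right (by linarith [hx i hi]) hk
    · rw [map_sub, map_smul, offSum_update_one, smul_eq_mul]
      nlinarith
  · right
    have hoff : 0 ≤ offSum L x := by
      rw [offSum_apply]
      exact sum_nonneg fun i hi => (hx i (ne_of_mem_erase hi)).1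
    have hm : 0 < m := hm.lt_of_ne (by rintro rfl; linarith)
    set t := -x L / m
    have hxt : x L = t * -m := by simp only [t]; field_simp
    rw [hxt] at hxm
    refine mem_apexSimplex_of_le t (div_nonneg (by linarith) hm.le) (fun i hi => ?_) ?_
      (by simp [hxt])
    · simpa [hi] using (hx i hi).1
    · rw [map_sub, map_smul, offSum_single_self, smul_zero, sub_zero]
      nlinarith

theorem convexHull_apexPair_eq_union {k m : ℝ} (hk : 0 < k) (hm : 0 ≤ m)
    (hkm : ((Fintype.card ι : ℝ) - 2) * m ≤ k) :
    convexHull ℝ (apexPairVertices L k m) =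
      apexSimplex L (Function.update 1 L k) ∪ apexSimplex L (Pi.single L (-m)) := by
  refine subset_antisymm ?_ (Set.union_subset (convexHull_mono Set.subset_union_left)
    (convexHull_mono (Set.union_subset_union_left _ Set.subset_union_left :
      _ ⊆ apexPairVertices L k m)))
  exact (convexHull_min (vertices_subset_facetPolyhedron hk.le hm hkm)
    (convex_facetPolyhedron k m)).trans (facetPolyhedron_subset_union hk hm)

end ApexPair

theorem volume_convexHull_apexPair {n : ℕ} (hn : 3 ≤ n) (L : Fin n) {k m : ℝ} (hm : 0 ≤ m)
    (hkm : ((n : ℝ) - 2) * m ≤ k) :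
    volume (convexHull ℝ (apexPairVertices L k m)) = ENNReal.ofReal ((k + m) / n.factorial) := by
  have hn2 : (1 : ℝ) ≤ n - 2 := by
    rw [le_sub_iff_add_le]; exact_mod_cast hn
  rcases hm.eq_or_lt with rfl | hm
  · have hk : 0 ≤ k := by simpa using hkm
    rw [apexPairVertices, neg_zero, Pi.single_zero, Set.union_eq_left.2 (by simp), ← apexSimplex,
      volume_apexSimplex]
    simp [abs_of_nonneg hk]
  · have hk : 0 < k := by nlinarith
    rw [convexHull_apexPair_eq_union hk hm.le (by simpa using hkm),
      measure_union₀ (isCompact_apexSimplex _).measurableSet.nullMeasurableSet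
        (aedisjoint_apexSimplex (by simpa using hk.le) (by simpa using hm.le)),
      volume_apexSimplex, volume_apexSimplex, ← ENNReal.ofReal_add (by positivity) (by positivity)]
    simp [abs_of_pos hk, abs_of_pos hm, add_div]

theorem Pdwk_eq_convexHull (d w : ℕ) (k : ℤ) (L : Fin d) (hL : (L : ℕ) = d - 1) :
    Pdwk d w k = convexHull ℝ (apexPairVertices L k (w - d - 1 : ℕ)) := by
  have hiL : ∀ i : Fin d, (i : ℕ) = d - 1 ↔ i = L := fun i => by rw [Fin.ext_iff, hL]
  have hbase : {x | ∃ i : Fin d, (i : ℕ) < d - 1 ∧ x = Pi.single i (1 : ℝ)} =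
      {x | ∃ i ≠ L, x = Pi.single i 1} := by
    ext x
    refine exists_congr fun i => and_congr_left fun _ => ?_
    rw [← not_iff_not, not_not, ← hiL]
    omega
  have hsingle : ∀ c : ℝ, (fun i : Fin d => if (i : ℕ) = d - 1 then c else 0) = Pi.single L c :=
    fun c => funext fun i => by simp [hiL, Pi.single_apply]
  have hapex : (fun i : Fin d => if (i : ℕ) = d - 1 then (k : ℝ) else 1) =
      Function.update (1 : Fin d → ℝ) L k :=
    funext fun i => by simp [hiL, Function.update_apply]
  rw [Pdwk, hbase, hapex]
  simp_rw [hsingle]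
  set m := w - d - 1
  have hsub : apexPairVertices L k m ⊆ convexHull ℝ (apexPairVertices L k m) :=
    subset_convexHull ℝ _
  refine subset_antisymm (convexHull_min ?_ (convex_convexHull ℝ _)) (convexHull_mono ?_)
  · rintro _ (((rfl | hx) | ⟨j, hj, hjm, rfl⟩) | rfl)
    · exact hsub (Or.inl (Or.inl (Or.inl rfl)))
    · exact hsub (Or.inl (Or.inl (Or.inr hx)))
    · have hj : (j : ℝ) / m ∈ Set.Icc 0 1 :=
        ⟨by positivity, div_le_one_of_le₀ (by exact_mod_cast hjm) (Nat.cast_nonneg m)⟩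
      have hm : (m : ℝ) ≠ 0 := by norm_cast; omega
      convert (convex_convexHull ℝ _).smul_mem_of_zero_mem (hsub (Or.inl (Or.inl (Or.inl rfl))))
        (hsub (Or.inr rfl)) hj using 1
      rw [← Pi.single_smul', smul_eq_mul]
      field_simp
    · exact hsub (Or.inl (Or.inr rfl))
  · rintro _ (((rfl | hx) | rfl) | rfl)
    · exact Or.inl (Or.inl (Or.inl rfl))
    · exact Or.inl (Or.inl (Or.inr hx))
    · exact Or.inr rfl
    · rcases Nat.eq_zero_or_pos m with hm | hm
      · simp [hm]
      · exact Or.inl (Or.inr ⟨m, hm, le_rfl, rfl⟩)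

/-- For `d ≥ 3`, `w ≥ d + 1` and `k ≥ (d-2)(w-d-1)`, the polytope `P(d,w,k)` has
volume `(k + w - d - 1)/d!`. -/
theorem Pdwk_volume (d w : ℕ) (k : ℤ) (hd : 3 ≤ d) (hw : d + 1 ≤ w)
    (hk : ((d : ℤ) - 2) * ((w : ℤ) - d - 1) ≤ k) :
    volume (Pdwk d w k) =
      ENNReal.ofReal (((k : ℝ) + (w : ℝ) - (d : ℝ) - 1) / (d.factorial : ℝ)) := by
  have hm : ((w - d - 1 : ℕ) : ℝ) = w - d - 1 := by
    rw [Nat.sub_sub, Nat.cast_sub hw]; push_cast; ring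
  rw [Pdwk_eq_convexHull d w k ⟨d - 1, by omega⟩ rfl,
    volume_convexHull_apexPair hd _ (by positivity) (by rw [hm]; exact_mod_cast hk), hm,
    add_sub_assoc', add_sub_assoc']

end
end
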